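/- arXiv:2507.21543 — 2 statements merged into one kernel-verified Lean document; each statement's English description precedes it below -/
import Mathlib

section
/- For every k ∈ {0,…,T−1}, the matrices Σ_{Q_k} = ε (R_k + B_kᵀ Π_{k+1} B_k)^{−1} satisfy the Loewner-order bounds Σ̂_{Q_k} ⪰ Σ_{Q_k} ⪰ Σ̌_{Q_k} ≻ 0, where Σ̂_{Q_k} = ε (R_k + B_kᵀ Π̌_{k+1} B_k)^{−1} and Σ̌_{Q_k} = ε (R_k + B_kᵀ Π̂_{k+1} B_k)^{−1}; in particular these bounds are independent of the covariances Σ_{ρ_0},…,Σ_{ρ_{T−1}}. -/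
open Matrix Filter Topology

/-- The unique symmetric positive semidefinite square root of a positive
semidefinite real matrix (junk value `0` if the matrix is not PSD). -/
noncomputable def msqrt {d : ℕ} (X : Matrix (Fin d) (Fin d) ℝ) :
    Matrix (Fin d) (Fin d) ℝ :=
  letI := Classical.propDecidable X.PosSemidef
  if h : X.PosSemidef then
    h.1.eigenvectorUnitary.1 * diagonal ((↑) ∘ (√·) ∘ h.1.eigenvalues) *
      (star h.1.eigenvectorUnitary : Matrix (Fin d) (Fin d) ℝ)
  else 0

/-- The Frobenius norm of a real square matrix. -/
noncomputable def frob {d : ℕ} (X : Matrix (Fin d) (Fin d) ℝ) : ℝ :=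
  Real.sqrt (∑ i, ∑ j, X i j ^ 2)

/-- Data of the mutual information optimal control problem for a discrete-time
linear system `x_{k+1} = A_k x_k + B_k u_k + w_k`. -/
structure LQData (n m : ℕ) where
  ε : ℝ
  A : ℕ → Matrix (Fin n) (Fin n) ℝ
  B : ℕ → Matrix (Fin n) (Fin m) ℝ
  R : ℕ → Matrix (Fin m) (Fin m) ℝ
  F : Matrix (Fin n) (Fin n) ℝ
  Sw : ℕ → Matrix (Fin n) (Fin n) ℝ
  Sini : Matrix (Fin n) (Fin n) ℝ

namespace LQData

variable {n m : ℕ} (P : LQData n m) (T : ℕ) (Srho : ℕ → Matrix (Fin m) (Fin m) ℝ)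

/-- The backward Riccati recursion `Π_k` associated with the prior covariances
`Σ_{ρ_k}`: `Π_T = F` and
`Π_k = A_kᵀ Π_{k+1} A_k − (1/ε) A_kᵀ Π_{k+1} B_k Σ^{1/2} (I + Σ^{1/2} C_k Σ^{1/2})⁻¹ Σ^{1/2} B_kᵀ Π_{k+1} A_k`
with `C_k = (R_k + B_kᵀ Π_{k+1} B_k)/ε`. -/
noncomputable def Ric (k : ℕ) : Matrix (Fin n) (Fin n) ℝ :=
  if h : T ≤ k then P.F
  else
    let Pk := Ric (k + 1)
    let S := msqrt (Srho k)
    let C := (1 / P.ε) • (P.R k + (P.B k)ᵀ * Pk * P.B k)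
    (P.A k)ᵀ * Pk * P.A k -
      (1 / P.ε) • ((P.A k)ᵀ * Pk * P.B k * S * (1 + S * C * S)⁻¹ * S * (P.B k)ᵀ * Pk * P.A k)
termination_by T - k
decreasing_by omega

/-- `C_k = (R_k + B_kᵀ Π_{k+1} B_k)/ε`. -/
noncomputable def Ck (k : ℕ) : Matrix (Fin m) (Fin m) ℝ :=
  (1 / P.ε) • (P.R k + (P.B k)ᵀ * P.Ric T Srho (k + 1) * P.B k)

/-- `Σ_{Q_k} = ε (R_k + B_kᵀ Π_{k+1} B_k)⁻¹`. -/
noncomputable def SigQ (k : ℕ) : Matrix (Fin m) (Fin m) ℝ :=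
  P.ε • (P.R k + (P.B k)ᵀ * P.Ric T Srho (k + 1) * P.B k)⁻¹

/-- Covariance `Σ_{π_k}` of the optimal policy for the fixed prior. -/
noncomputable def SigPi (k : ℕ) : Matrix (Fin m) (Fin m) ℝ :=
  msqrt (Srho k) * (1 + msqrt (Srho k) * P.Ck T Srho k * msqrt (Srho k))⁻¹ * msqrt (Srho k)

/-- Feedback gain `P_k = −(1/ε) Σ_{π_k} B_kᵀ Π_{k+1} A_k`. -/
noncomputable def Pgain (k : ℕ) : Matrix (Fin m) (Fin n) ℝ :=
  -((1 / P.ε) • (P.SigPi T Srho k * (P.B k)ᵀ * P.Ric T Srho (k + 1) * P.A k))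

/-- Forward state covariance recursion under the optimal policy. -/
noncomputable def Sigx : ℕ → Matrix (Fin n) (Fin n) ℝ
  | 0 => P.Sini
  | k + 1 =>
    (P.A k + P.B k * P.Pgain T Srho k) * Sigx k *
        (P.A k + P.B k * P.Pgain T Srho k)ᵀ +
      P.B k * P.SigPi T Srho k * (P.B k)ᵀ + P.Sw k

/-- The standard LQR Riccati recursion `Π̌_k`. -/
noncomputable def RicLQR (k : ℕ) : Matrix (Fin n) (Fin n) ℝ :=
  if h : T ≤ k then P.F
  else
    let Pk := RicLQR (k + 1)
    (P.A k)ᵀ * Pk * P.A k -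
      (P.A k)ᵀ * Pk * P.B k * (P.R k + (P.B k)ᵀ * Pk * P.B k)⁻¹ * (P.B k)ᵀ * Pk * P.A k
termination_by T - k
decreasing_by omega

/-- `Π̂_k = A_kᵀ ⋯ A_{T−1}ᵀ F A_{T−1} ⋯ A_k`. -/
noncomputable def RicHat (k : ℕ) : Matrix (Fin n) (Fin n) ℝ :=
  if h : T ≤ k then P.F
  else (P.A k)ᵀ * RicHat (k + 1) * P.A k
termination_by T - k
decreasing_by omega

/-- `Σ_{w_{k−1}}` with the convention `Σ_{w_{−1}} := Σ_{x_ini}`. -/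
noncomputable def Swm1 (k : ℕ) : Matrix (Fin n) (Fin n) ℝ :=
  if k = 0 then P.Sini else P.Sw (k - 1)

/-- The matrix `M̌_k` from the sufficient condition for stochastic optimal policies. -/
noncomputable def Mcheck (k : ℕ) : Matrix (Fin m) (Fin m) ℝ :=
  (P.R k + (P.B k)ᵀ * P.RicHat T (k + 1) * P.B k)⁻¹ *
      ((P.B k)ᵀ * P.RicLQR T (k + 1) * P.A k * P.Swm1 k * (P.A k)ᵀ *
        P.RicLQR T (k + 1) * P.B k) *
      (P.R k + (P.B k)ᵀ * P.RicHat T (k + 1) * P.B k)⁻¹ -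
    P.ε • (P.R k + (P.B k)ᵀ * P.RicLQR T (k + 1) * P.B k)⁻¹

/-- State covariance under the zero control input. -/
noncomputable def SigxZero : ℕ → Matrix (Fin n) (Fin n) ℝ
  | 0 => P.Sini
  | k + 1 => P.A k * SigxZero k * (P.A k)ᵀ + P.Sw k

/-- The matrix `M̂_k^zero` from the sufficient condition for deterministic optimal policies. -/
noncomputable def MhatZero (k : ℕ) : Matrix (Fin m) (Fin m) ℝ :=
  (P.R k + (P.B k)ᵀ * P.RicLQR T (k + 1) * P.B k)⁻¹ *
      ((P.B k)ᵀ * P.RicHat T (k + 1) * P.A k * P.SigxZero k * (P.A k)ᵀ *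
        P.RicHat T (k + 1) * P.B k) *
      (P.R k + (P.B k)ᵀ * P.RicLQR T (k + 1) * P.B k)⁻¹ -
    P.ε • (P.R k + (P.B k)ᵀ * P.RicHat T (k + 1) * P.B k)⁻¹


/-- The backward recursion `r_k` for the mean offset:
`r_T = 0` and `r_k = A_k⁻¹ r_{k+1} − Π_k⁻¹ A_kᵀ Π_{k+1} B_k (I + Σ_{ρ_k} C_k)⁻¹ μ_{ρ_k}`. -/
noncomputable def rvec (μ : ℕ → Fin m → ℝ) (k : ℕ) : Fin n → ℝ :=
  if h : T ≤ k then 0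
  else
    ((P.A k)⁻¹).mulVec (rvec μ (k + 1)) -
      ((P.Ric T Srho k)⁻¹ * ((P.A k)ᵀ * P.Ric T Srho (k + 1) * P.B k *
        (1 + Srho k * P.Ck T Srho k)⁻¹)).mulVec (μ k)
termination_by T - k
decreasing_by omega

/-- `Θ_k = ε C_k − ε C_k Σ_{π_k} C_k − (I − C_k Σ_{π_k}) B_kᵀ Π_{k+1} A_k Π_k⁻¹ A_kᵀ Π_{k+1} B_k (I − Σ_{π_k} C_k)`. -/
noncomputable def Theta (k : ℕ) : Matrix (Fin m) (Fin m) ℝ :=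
  P.ε • P.Ck T Srho k - P.ε • (P.Ck T Srho k * P.SigPi T Srho k * P.Ck T Srho k) -
    (1 - P.Ck T Srho k * P.SigPi T Srho k) *
      ((P.B k)ᵀ * P.Ric T Srho (k + 1) * P.A k * (P.Ric T Srho k)⁻¹ *
        ((P.A k)ᵀ * P.Ric T Srho (k + 1) * P.B k)) *
      (1 - P.SigPi T Srho k * P.Ck T Srho k)

end LQData

/-- Extend a `T`-tuple of matrices to a function on `ℕ` (by zero). -/
def extT {m : ℕ} (T : ℕ) (σ : Fin T → Matrix (Fin m) (Fin m) ℝ) :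
    ℕ → Matrix (Fin m) (Fin m) ℝ :=
  fun k => if h : k < T then σ ⟨k, h⟩ else 0


/-- Extend a `T`-tuple of vectors to a function on `ℕ` (by zero). -/
def extV {m : ℕ} (T : ℕ) (μ : Fin T → Fin m → ℝ) : ℕ → Fin m → ℝ :=
  fun k => if h : k < T then μ ⟨k, h⟩ else 0

namespace LQData

variable {n m : ℕ} (P : LQData n m) (T : ℕ)

/-- The reduced objective `J̌` as a function of the `T`-tuple of prior covariances. -/
noncomputable def Jcheck (σ : Fin T → Matrix (Fin m) (Fin m) ℝ) : ℝ :=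
  (1 / 2) * ((P.Ric T (extT T σ) 0 * P.Sini).trace +
    ∑ k : Fin T,
      (P.ε * Real.log ((extT T σ k + P.SigQ T (extT T σ) k).det / (P.SigQ T (extT T σ) k).det) +
        (P.Ric T (extT T σ) (k + 1) * P.Sw k).trace))

/-- `L_k = (Σ_{Q_k} + Σ_{ρ_k})⁻¹`. -/
noncomputable def Lmat (Srho : ℕ → Matrix (Fin m) (Fin m) ℝ) (k : ℕ) :
    Matrix (Fin m) (Fin m) ℝ :=
  (P.SigQ T Srho k + Srho k)⁻¹

/-- `E_k = (1/ε) Σ_{Q_k} B_kᵀ Π_{k+1} A_k`. -/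
noncomputable def Emat (Srho : ℕ → Matrix (Fin m) (Fin m) ℝ) (k : ℕ) :
    Matrix (Fin m) (Fin n) ℝ :=
  (1 / P.ε) • (P.SigQ T Srho k * (P.B k)ᵀ * P.Ric T Srho (k + 1) * P.A k)

/-- `J̌'_k = (ε/2) L_k (Σ_{ρ_k} + Σ_{Q_k} − E_k Σ_{x_k} E_kᵀ) L_k`. -/
noncomputable def Jprime (Srho : ℕ → Matrix (Fin m) (Fin m) ℝ) (k : ℕ) :
    Matrix (Fin m) (Fin m) ℝ :=
  (P.ε / 2) • (P.Lmat T Srho k *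
    (Srho k + P.SigQ T Srho k - P.Emat T Srho k * P.Sigx T Srho k * (P.Emat T Srho k)ᵀ) *
    P.Lmat T Srho k)

/-- The alternating-optimization update map `𝒯` on `T`-tuples of prior covariances:
`𝒯(σ)_k = Σ_{π_k} + P_k Σ_{x_k} P_kᵀ`. -/
noncomputable def Tmap (σ : Fin T → Matrix (Fin m) (Fin m) ℝ) :
    Fin T → Matrix (Fin m) (Fin m) ℝ :=
  fun k =>
    P.SigPi T (extT T σ) k +
      P.Pgain T (extT T σ) k * P.Sigx T (extT T σ) k * (P.Pgain T (extT T σ) k)ᵀ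

/-- The objective `J` as a function of the prior means, for fixed prior covariances:
`J(μ) = (1/2)( r_0ᵀ Π_0 r_0 + Σ_k μ_{ρ_k}ᵀ Θ_k μ_{ρ_k} )`. -/
noncomputable def Jmean (Srho : ℕ → Matrix (Fin m) (Fin m) ℝ) (μ : Fin T → Fin m → ℝ) : ℝ :=
  (1 / 2) *
    (P.rvec T Srho (extV T μ) 0 ⬝ᵥ (P.Ric T Srho 0).mulVec (P.rvec T Srho (extV T μ) 0) +
      ∑ k : Fin T, μ k ⬝ᵥ (P.Theta T Srho k).mulVec (μ k))

end LQData

open Matrix Filter Topology LQData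

/-
Write `G(Y) = R + BᵀYB`. The LQR Riccati operator `AᵀYA − AᵀYB G(Y)⁻¹ BᵀYA` is the Schur
complement of `G(Y)` in the block matrix `[[G(Y), BᵀYA], [AᵀYB, AᵀYA]]`, which is monotone in
`Y`; hence the operator is monotone and nonnegative. One step of the recursion for `Π` lies
between the LQR step and `Y ↦ AᵀYA`, because `S (1 + S C S)⁻¹ S ⪯ C⁻¹ = ε G(Y)⁻¹`. Downward
induction gives `0 ⪯ Π̌_k ⪯ Π_k ⪯ Π̂_k`, and the bounds on `Σ_{Q_k} = ε G(Π_{k+1})⁻¹` follow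
because inversion is antitone on positive definite matrices.
-/
open scoped MatrixOrder ComplexOrder

namespace Matrix

variable {𝕜 : Type*} [RCLike 𝕜] {m n : Type*} [Fintype m] [Fintype n] [DecidableEq m]
  [DecidableEq n]

theorem PosDef.inv_inv {X : Matrix n n 𝕜} (hX : X.PosDef) : X⁻¹⁻¹ = X :=
  let _ := hX.isUnit.invertible
  inv_inv_of_invertible X

theorem PosDef.posSemidef_schur_complement_swap {A : Matrix m m 𝕜} {D : Matrix n n 𝕜}
    (hA : A.PosDef) (hD : D.PosDef) (B : Matrix m n 𝕜)
    (h : (A - B * D⁻¹ * Bᴴ).PosSemidef) : (D - Bᴴ * A⁻¹ * B).PosSemidef := by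
  let _ := hA.isUnit.invertible
  let _ := hD.isUnit.invertible
  exact (PosDef.fromBlocks₁₁ B D hA).mp ((PosDef.fromBlocks₂₂ A B hD).mpr h)

theorem PosDef.inv_le_inv {X Y : Matrix n n 𝕜} (hX : X.PosDef) (hXY : X ≤ Y) :
    Y⁻¹ ≤ X⁻¹ := by
  have hY : Y.PosDef := by simpa using hX.add_posSemidef hXY
  rw [le_iff]
  simpa using hY.posSemidef_schur_complement_swap hX.inv 1
    (by simpa [hX.inv_inv] using le_iff.mp hXY)

theorem PosDef.mul_inv_one_add_mul_le_inv {C : Matrix n n 𝕜} (hC : C.PosDef)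
    (S : Matrix n m 𝕜) : S * (1 + Sᴴ * C * S)⁻¹ * Sᴴ ≤ C⁻¹ := by
  have hA : (1 + Sᴴ * C * S).PosDef :=
    PosDef.one.add_posSemidef (hC.posSemidef.conjTranspose_mul_mul_same S)
  rw [le_iff]
  simpa using hA.posSemidef_schur_complement_swap hC.inv Sᴴ
    (by simpa [hC.inv_inv] using PosSemidef.one)

omit [DecidableEq m] [DecidableEq n] in
theorem transpose_mul_mul_le_transpose_mul_mul (M : Matrix n m ℝ) {X Y : Matrix n n ℝ}
    (h : X ≤ Y) : Mᵀ * X * M ≤ Mᵀ * Y * M := by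
  rw [le_iff]
  simpa [Matrix.mul_sub, Matrix.sub_mul] using (le_iff.mp h).conjTranspose_mul_mul_same M

omit [DecidableEq m] [DecidableEq n] in
theorem PosDef.add_transpose_mul_mul {R : Matrix m m ℝ} (hR : R.PosDef) (B : Matrix n m ℝ)
    {Y : Matrix n n ℝ} (hY : 0 ≤ Y) : (R + Bᵀ * Y * B).PosDef := by
  simpa using hR.add_posSemidef ((nonneg_iff_posSemidef.mp hY).conjTranspose_mul_mul_same B)

omit [DecidableEq n] in
theorem PosDef.inv_add_transpose_mul_mul_le_of_le {R : Matrix m m ℝ} (hR : R.PosDef)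
    (B : Matrix n m ℝ) {Y₁ Y₂ : Matrix n n ℝ} (hY₁ : 0 ≤ Y₁) (h : Y₁ ≤ Y₂) :
    (R + Bᵀ * Y₂ * B)⁻¹ ≤ (R + Bᵀ * Y₁ * B)⁻¹ :=
  (hR.add_transpose_mul_mul B hY₁).inv_le_inv
    (add_le_add le_rfl (transpose_mul_mul_le_transpose_mul_mul B h))

end Matrix

section Riccati

variable {m n : Type*} [Fintype m] [Fintype n] [DecidableEq m]
  {A : Matrix n n ℝ} {B : Matrix n m ℝ} {R : Matrix m m ℝ} {Y : Matrix n n ℝ}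

variable (A B R) in
noncomputable def riccati (Y : Matrix n n ℝ) : Matrix n n ℝ :=
  Aᵀ * Y * A - Aᵀ * Y * B * (R + Bᵀ * Y * B)⁻¹ * Bᵀ * Y * A

variable (A B R) in
/-- One step of the recursion for `Π`, with `S` in the role of `Σ_ρ^{1/2}`. -/
noncomputable def miRiccati (ε : ℝ) (S : Matrix m m ℝ) (Y : Matrix n n ℝ) : Matrix n n ℝ :=
  Aᵀ * Y * A - (1 / ε) •
    (Aᵀ * Y * B * S * (1 + S * ((1 / ε) • (R + Bᵀ * Y * B)) * S)⁻¹ * S * Bᵀ * Y * A)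

theorem le_riccati_iff (hR : R.PosDef) (hY : 0 ≤ Y) (X : Matrix n n ℝ) :
    X ≤ riccati A B R Y ↔
      (fromBlocks (R + Bᵀ * Y * B) (Bᵀ * Y * A) (Aᵀ * Y * B) (Aᵀ * Y * A - X)).PosSemidef := by
  have hYt : Yᵀ = Y := (nonneg_iff_posSemidef.mp hY).isHermitian
  have hG := hR.add_transpose_mul_mul B hY
  let _ := hG.isUnit.invertible
  have := PosDef.fromBlocks₁₁ (Bᵀ * Y * A) (Aᵀ * Y * A - X) hG
  rw [le_iff, riccati, sub_right_comm]
  simp only [conjTranspose_eq_transpose_of_trivial, transpose_mul, transpose_transpose, hYt,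
    Matrix.mul_assoc] at this ⊢
  exact this.symm

theorem riccati_mono (hR : R.PosDef) {Y₁ Y₂ : Matrix n n ℝ} (hY₁ : 0 ≤ Y₁) (h : Y₁ ≤ Y₂) :
    riccati A B R Y₁ ≤ riccati A B R Y₂ := by
  have hblock := (le_riccati_iff hR hY₁ (riccati A B R Y₁)).mp le_rfl
  have hsplit : fromBlocks (R + Bᵀ * Y₂ * B) (Bᵀ * Y₂ * A) (Aᵀ * Y₂ * B)
        (Aᵀ * Y₂ * A - riccati A B R Y₁) =
      fromBlocks (R + Bᵀ * Y₁ * B) (Bᵀ * Y₁ * A) (Aᵀ * Y₁ * B)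
        (Aᵀ * Y₁ * A - riccati A B R Y₁) + (fromCols B A)ᵀ * (Y₂ - Y₁) * fromCols B A := by
    rw [transpose_fromCols, fromRows_mul, fromRows_mul_fromCols, fromBlocks_add]
    congr 1 <;> simp only [Matrix.mul_sub, Matrix.sub_mul] <;> abel
  rw [le_riccati_iff hR (hY₁.trans h), hsplit]
  simpa using hblock.add ((le_iff.mp h).conjTranspose_mul_mul_same (fromCols B A))

theorem riccati_nonneg (hR : R.PosDef) (hY : 0 ≤ Y) : 0 ≤ riccati A B R Y := by
  simpa [riccati] using riccati_mono (A := A) (B := B) hR le_rfl hY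

theorem riccati_le_miRiccati {ε : ℝ} (hε : 0 < ε) (hR : R.PosDef) (hY : 0 ≤ Y)
    {S : Matrix m m ℝ} (hS : S.IsHermitian) :
    riccati A B R Y ≤ miRiccati A B R ε S Y := by
  set G := R + Bᵀ * Y * B
  set C := (1 / ε) • G
  have hC : C.PosDef := (hR.add_transpose_mul_mul B hY).smul (by positivity)
  have hGinv : G⁻¹ = (1 / ε) • C⁻¹ := by
    refine inv_eq_left_inv ?_
    rw [smul_mul, ← Matrix.mul_smul]
    exact nonsing_inv_mul _ hC.det_pos.ne'.isUnit
  have hSt : Sᵀ = S := hS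
  have hSWS : (1 / ε) • (S * (1 + S * C * S)⁻¹ * S) ≤ G⁻¹ := by
    have := hC.mul_inv_one_add_mul_le_inv S
    rw [conjTranspose_eq_transpose_of_trivial, hSt] at this
    rw [hGinv]
    exact smul_le_smul_of_nonneg_left this (by positivity)
  have hYt : Yᵀ = Y := (nonneg_iff_posSemidef.mp hY).isHermitian
  have hdiff : miRiccati A B R ε S Y - riccati A B R Y =
      (Bᵀ * Y * A)ᵀ * (G⁻¹ - (1 / ε) • (S * (1 + S * C * S)⁻¹ * S)) * (Bᵀ * Y * A) := by
    simp only [miRiccati, riccati, G, C, transpose_mul, transpose_transpose, hYt,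
      Matrix.mul_sub, Matrix.sub_mul, Matrix.mul_smul, Matrix.smul_mul, Matrix.mul_assoc]
    abel
  rw [le_iff, hdiff]
  simpa using (le_iff.mp hSWS).conjTranspose_mul_mul_same (Bᵀ * Y * A)

theorem miRiccati_le {ε : ℝ} (hε : 0 < ε) (hR : R.PosDef) (hY : 0 ≤ Y)
    {S : Matrix m m ℝ} (hS : S.IsHermitian) :
    miRiccati A B R ε S Y ≤ Aᵀ * Y * A := by
  set C := (1 / ε) • (R + Bᵀ * Y * B)
  have hC : C.PosDef := (hR.add_transpose_mul_mul B hY).smul (by positivity)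
  have hSt : Sᵀ = S := hS
  have hW : (1 + S * C * S)⁻¹.PosDef := by
    refine (PosDef.one.add_posSemidef ?_).inv
    simpa [hSt] using hC.posSemidef.conjTranspose_mul_mul_same S
  have hYt : Yᵀ = Y := (nonneg_iff_posSemidef.mp hY).isHermitian
  have hdiff : Aᵀ * Y * A - miRiccati A B R ε S Y =
      (1 / ε) • ((S * (Bᵀ * Y * A))ᵀ * (1 + S * C * S)⁻¹ * (S * (Bᵀ * Y * A))) := by
    simp only [miRiccati, C, transpose_mul, transpose_transpose, hYt, hSt, Matrix.mul_assoc]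
    abel
  rw [le_iff, hdiff]
  refine PosSemidef.smul ?_ (by positivity)
  simpa using hW.posSemidef.conjTranspose_mul_mul_same (S * (Bᵀ * Y * A))

end Riccati

theorem posSemidef_msqrt {d : ℕ} (X : Matrix (Fin d) (Fin d) ℝ) : (msqrt X).PosSemidef := by
  unfold msqrt
  split
  · next h =>
    have hD : (diagonal ((↑) ∘ (√·) ∘ h.1.eigenvalues : Fin d → ℝ)).PosSemidef :=
      PosSemidef.diagonal fun i => by simp [Real.sqrt_nonneg]
    simpa [star_eq_conjTranspose] using
      hD.mul_mul_conjTranspose_same (h.1.eigenvectorUnitary : Matrix (Fin d) (Fin d) ℝ)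
  · exact PosSemidef.zero

namespace LQData

variable {n m : ℕ} (P : LQData n m) {T k : ℕ} (Srho : ℕ → Matrix (Fin m) (Fin m) ℝ)

theorem ric_of_le (h : T ≤ k) : P.Ric T Srho k = P.F := by
  rw [Ric, dif_pos h]

theorem ricLQR_of_le (h : T ≤ k) : P.RicLQR T k = P.F := by
  rw [RicLQR, dif_pos h]

theorem ricHat_of_le (h : T ≤ k) : P.RicHat T k = P.F := by
  rw [RicHat, dif_pos h]

theorem ric_of_lt (h : k < T) :
    P.Ric T Srho k =
      miRiccati (P.A k) (P.B k) (P.R k) P.ε (msqrt (Srho k)) (P.Ric T Srho (k + 1)) := by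
  rw [Ric, dif_neg h.not_ge, miRiccati]

theorem ricLQR_of_lt (h : k < T) :
    P.RicLQR T k = riccati (P.A k) (P.B k) (P.R k) (P.RicLQR T (k + 1)) := by
  rw [RicLQR, dif_neg h.not_ge, riccati]

theorem ricHat_of_lt (h : k < T) :
    P.RicHat T k = (P.A k)ᵀ * P.RicHat T (k + 1) * P.A k := by
  rw [RicHat, dif_neg h.not_ge]

theorem zero_le_ricLQR_le_ric_le_ricHat (hε : 0 < P.ε) (hR : ∀ k < T, (P.R k).PosDef)
    (hF : 0 ≤ P.F) (k : ℕ) :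
    0 ≤ P.RicLQR T k ∧ P.RicLQR T k ≤ P.Ric T Srho k ∧ P.Ric T Srho k ≤ P.RicHat T k := by
  have terminal : ∀ k, T ≤ k →
      0 ≤ P.RicLQR T k ∧ P.RicLQR T k ≤ P.Ric T Srho k ∧ P.Ric T Srho k ≤ P.RicHat T k :=
    fun k hk => by
      rw [ricLQR_of_le P hk, ric_of_le P Srho hk, ricHat_of_le P hk]
      exact ⟨hF, le_rfl, le_rfl⟩
  obtain hk | hk := le_total k T
  · induction hk using Nat.decreasingInduction with
    | self => exact terminal T le_rfl
    | of_succ k hk ih =>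
      obtain ⟨hLQR, hlow, hup⟩ := ih
      have hS := (posSemidef_msqrt (Srho k)).isHermitian
      rw [ricLQR_of_lt P hk, ric_of_lt P Srho hk, ricHat_of_lt P hk]
      exact ⟨riccati_nonneg (hR k hk) hLQR,
        (riccati_mono (hR k hk) hLQR hlow).trans
          (riccati_le_miRiccati hε (hR k hk) (hLQR.trans hlow) hS),
        (miRiccati_le hε (hR k hk) (hLQR.trans hlow) hS).trans
          (transpose_mul_mul_le_transpose_mul_mul _ hup)⟩
  · exact terminal k hk

end LQData

theorem sigQ_loewner_bounds_general {n m : ℕ} (T : ℕ)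
    (P : LQData n m) (hε : 0 < P.ε)
    (hR : ∀ k < T, (P.R k).PosDef)
    (hF : P.F.PosDef)
    (Srho : ℕ → Matrix (Fin m) (Fin m) ℝ) :
    ∀ k < T,
      (P.ε • (P.R k + (P.B k)ᵀ * P.RicLQR T (k + 1) * P.B k)⁻¹ - P.SigQ T Srho k).PosSemidef ∧
      (P.SigQ T Srho k - P.ε • (P.R k + (P.B k)ᵀ * P.RicHat T (k + 1) * P.B k)⁻¹).PosSemidef ∧
      (P.ε • (P.R k + (P.B k)ᵀ * P.RicHat T (k + 1) * P.B k)⁻¹).PosDef := by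
  intro k hk
  obtain ⟨hLQR, hlow, hup⟩ :=
    P.zero_le_ricLQR_le_ric_le_ricHat Srho hε hR (nonneg_iff_posSemidef.mpr hF.posSemidef) (k + 1)
  have hRk := hR k hk
  exact ⟨smul_le_smul_of_nonneg_left (hRk.inv_add_transpose_mul_mul_le_of_le _ hLQR hlow) hε.le,
    smul_le_smul_of_nonneg_left
      (hRk.inv_add_transpose_mul_mul_le_of_le _ (hLQR.trans hlow) hup) hε.le,
    (hRk.add_transpose_mul_mul _ (hLQR.trans (hlow.trans hup))).inv.smul hε⟩

theorem sigQ_loewner_bounds {n m : ℕ} (hn : 1 ≤ n) (hm : 1 ≤ m) (T : ℕ) (hT : 1 ≤ T)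
    (P : LQData n m) (hε : 0 < P.ε)
    (hR : ∀ k < T, (P.R k).PosDef) (hSw : ∀ k < T, (P.Sw k).PosDef)
    (hF : P.F.PosDef) (hSini : P.Sini.PosDef)
    (Srho : ℕ → Matrix (Fin m) (Fin m) ℝ) (hSrho : ∀ k < T, (Srho k).PosSemidef) :
    ∀ k < T,
      (P.ε • (P.R k + (P.B k)ᵀ * P.RicLQR T (k + 1) * P.B k)⁻¹ - P.SigQ T Srho k).PosSemidef ∧
      (P.SigQ T Srho k - P.ε • (P.R k + (P.B k)ᵀ * P.RicHat T (k + 1) * P.B k)⁻¹).PosSemidef ∧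
      (P.ε • (P.R k + (P.B k)ᵀ * P.RicHat T (k + 1) * P.B k)⁻¹).PosDef :=
  sigQ_loewner_bounds_general T P hε hR hF Srho
end

section
/- Assume each A_k is invertible. For fixed symmetric positive semidefinite covariances Σ_{ρ_0},…,Σ_{ρ_{T−1}}, the function J of the prior means defined by J(μ_{ρ_0},…,μ_{ρ_{T−1}}) = (1/2)[ r_0ᵀ Π_0 r_0 + Σ_{k=0}^{T−1} μ_{ρ_k}ᵀ Θ_k μ_{ρ_k} ] attains its unique global minimum over (ℝ^m)^T at the zero tuple μ_{ρ_0} = ⋯ = μ_{ρ_{T−1}} = 0. -/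
open Matrix Filter Topology

open Matrix Filter Topology LQData

/-!
At zero means every `r_k` vanishes, so `J(0) = 0`; since `J` is half the sum of the quadratic
forms `r₀ᵀ Π₀ r₀` and `μ_kᵀ Θ_k μ_k`, it suffices that every `Π_k` and every `Θ_k` is positive
definite.

Write `S = Σ_ρ^{1/2}`, `W = Bᵀ Π_{k+1} B` and `Λ = S (ε + S R S)⁻¹ S`, a positive semidefinite
matrix. The key relation is `(Σ_π / ε)(1 + W Λ) = Λ` (and its transpose), which is
`S D⁻¹ (M + S W S) M⁻¹ S = S M⁻¹ S` for `M = ε + S R S` and `D = ε (1 + S C S) = M + S W S`.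
It gives `Π_k = Aᵀ X A` with `X⁻¹ = Π_{k+1}⁻¹ + B Λ Bᵀ`, so positive definiteness propagates
backwards from `Π_T = F`. Then `A Π_k⁻¹ Aᵀ = X⁻¹` turns the last term of `Θ_k` into
`W + W Λ W`, after which `Θ_k` collapses to `R − R Λ R = (R⁻¹ + ε⁻¹ S²)⁻¹`.
-/

section RingIdentities

variable {α : Type*} [Ring α]

theorem sandwich_mul_one_add_eq {s m mi d di w : α} (hm : m * mi = 1) (hd : d = m + s * w * s)
    (hdi : di * d = 1) : s * di * s * (1 + w * (s * mi * s)) = s * mi * s :=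
  calc s * di * s * (1 + w * (s * mi * s))
      = s * di * (m * mi) * s + s * di * (s * w * s) * mi * s := by rw [hm]; noncomm_ring
    _ = s * (di * d) * mi * s := by rw [hd]; noncomm_ring
    _ = s * mi * s := by rw [hdi, mul_one]

theorem one_add_mul_sandwich_eq {s m mi d di w : α} (hm : mi * m = 1) (hd : d = m + s * w * s)
    (hdi : d * di = 1) : (1 + s * mi * s * w) * (s * di * s) = s * mi * s :=
  calc (1 + s * mi * s * w) * (s * di * s)
      = s * (mi * m) * di * s + s * mi * (s * w * s) * di * s := by rw [hm]; noncomm_ring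
    _ = s * mi * (d * di) * s := by rw [hd]; noncomm_ring
    _ = s * mi * s := by rw [hdi, mul_one]

theorem add_sub_schur_eq {r w p σ : α} (h₁ : σ * (1 + w * p) = p) (h₂ : (1 + p * w) * σ = p) :
    (r + w) - (r + w) * σ * (r + w) - (1 - (r + w) * σ) * (w + w * p * w) * (1 - σ * (r + w)) =
      r - r * p * r :=
  calc _ = r - r * p * r + (r + w) * (p - σ * (1 + w * p)) * r
          - (1 - (r + w) * σ) * w * (p - (1 + p * w) * σ) * (r + w) := by noncomm_ring
    _ = r - r * p * r := by rw [h₁, h₂]; noncomm_ring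

end RingIdentities

theorem Matrix.sub_mul_mul_mul_add_mul_mul_eq_one {ι κ α : Type*} [Fintype ι] [DecidableEq ι]
    [Fintype κ] [DecidableEq κ] [Ring α] {Q Qi : Matrix ι ι α} {B : Matrix ι κ α}
    {σ P : Matrix κ κ α} (hQ : Q * Qi = 1) (hσ : σ * (1 + Bᵀ * Q * B * P) = P) :
    (Q - Q * B * σ * Bᵀ * Q) * (Qi + B * P * Bᵀ) = 1 :=
  calc _ = Q * Qi + Q * B * σ * Bᵀ * (1 - Q * Qi) +
        Q * B * (P - σ * (1 + Bᵀ * Q * B * P)) * Bᵀ := by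
        simp only [Matrix.mul_add, Matrix.add_mul, Matrix.mul_sub, Matrix.sub_mul,
          Matrix.mul_one, Matrix.mul_assoc]
        abel
    _ = 1 := by rw [hQ, hσ]; simp

section RealMatrix

variable {ι κ : Type*} [Fintype ι] [Fintype κ]

theorem posSemidef_transpose_mul_mul {A : Matrix ι ι ℝ} (hA : A.PosSemidef) (B : Matrix ι κ ℝ) :
    (Bᵀ * A * B).PosSemidef := by
  simpa [conjTranspose_eq_transpose_of_trivial] using hA.conjTranspose_mul_mul_same B

theorem posSemidef_mul_mul_transpose {A : Matrix κ κ ℝ} (hA : A.PosSemidef) (B : Matrix ι κ ℝ) :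
    (B * A * Bᵀ).PosSemidef := by
  simpa [conjTranspose_eq_transpose_of_trivial] using hA.mul_mul_conjTranspose_same B

variable [DecidableEq ι]

theorem posDef_transpose_mul_mul {X A : Matrix ι ι ℝ} (hX : X.PosDef) (hA : IsUnit A) :
    (Aᵀ * X * A).PosDef := by
  simpa [conjTranspose_eq_transpose_of_trivial] using
    hX.conjTranspose_mul_mul_same (mulVec_injective_of_isUnit hA)

theorem mul_inv_transpose_mul_mul_mul_transpose {X A : Matrix ι ι ℝ} (hA : IsUnit A) :
    A * (Aᵀ * X * A)⁻¹ * Aᵀ = X⁻¹ := by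
  have hA' : IsUnit A.det := (isUnit_iff_isUnit_det A).1 hA
  have hAT : IsUnit Aᵀ.det := by rwa [det_transpose]
  rw [Matrix.mul_inv_rev, Matrix.mul_inv_rev, ← Matrix.mul_assoc, ← Matrix.mul_assoc,
    mul_nonsing_inv _ hA', Matrix.one_mul, Matrix.mul_assoc, nonsing_inv_mul _ hAT,
    Matrix.mul_one]

end RealMatrix

section RiccatiStep

variable {ι κ : Type*} [Fintype ι] [DecidableEq ι] [Fintype κ] [DecidableEq κ]

theorem posDef_smul_one_add_mul_mul {ε : ℝ} (hε : 0 < ε) {R S : Matrix κ κ ℝ}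
    (hR : R.PosSemidef) (hS : S.IsHermitian) : (ε • 1 + S * R * S).PosDef := by
  have := hR.conjTranspose_mul_mul_same S
  rw [hS.eq] at this
  exact (PosDef.one.smul hε).add_posSemidef this

/-- For `S = Σ^{1/2}` with `Σ` invertible this is `(ε Σ⁻¹ + R)⁻¹`. -/
noncomputable def sandwichInv (ε : ℝ) (R S : Matrix κ κ ℝ) : Matrix κ κ ℝ :=
  S * (ε • 1 + S * R * S)⁻¹ * S

noncomputable def policyCov (ε : ℝ) (R W S : Matrix κ κ ℝ) : Matrix κ κ ℝ :=
  S * (1 + S * ((1 / ε) • (R + W)) * S)⁻¹ * S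

noncomputable def riccatiCore (ε : ℝ) (Q : Matrix ι ι ℝ) (B : Matrix ι κ ℝ)
    (R S : Matrix κ κ ℝ) : Matrix ι ι ℝ :=
  Q - Q * B * ((1 / ε) • policyCov ε R (Bᵀ * Q * B) S) * Bᵀ * Q

variable {ε : ℝ} {R W S : Matrix κ κ ℝ}

theorem sandwichInv_posSemidef (hε : 0 < ε) (hR : R.PosSemidef) (hS : S.IsHermitian) :
    (sandwichInv ε R S).PosSemidef := by
  have := (posDef_smul_one_add_mul_mul hε hR hS).inv.posSemidef.conjTranspose_mul_mul_same S
  rwa [hS.eq] at this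

theorem policyCov_mul_one_add (hε : 0 < ε) (hR : R.PosSemidef) (hW : W.PosSemidef)
    (hS : S.IsHermitian) :
    (1 / ε) • policyCov ε R W S * (1 + W * sandwichInv ε R S) = sandwichInv ε R S ∧
      (1 + sandwichInv ε R S * W) * ((1 / ε) • policyCov ε R W S) = sandwichInv ε R S := by
  set M := ε • 1 + S * R * S
  set N := 1 + S * ((1 / ε) • (R + W)) * S
  have hM : IsUnit M.det := (posDef_smul_one_add_mul_mul hε hR hS).det_pos.ne'.isUnit
  have hN : IsUnit N.det := by
    have := posDef_smul_one_add_mul_mul one_pos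
      ((hR.add hW).smul (show (0 : ℝ) ≤ 1 / ε by positivity)) hS
    simpa [N] using this.det_pos.ne'.isUnit
  have hεN : ε • N = M + S * W * S := by
    simp only [N, M, smul_add, Matrix.mul_smul, Matrix.smul_mul, smul_smul,
      mul_one_div_cancel hε.ne', one_smul, Matrix.mul_add, Matrix.add_mul]
    abel
  have hcov : (1 / ε) • policyCov ε R W S = S * ((1 / ε) • N⁻¹) * S := by
    simp only [policyCov, N, Matrix.mul_smul, Matrix.smul_mul]
  have hleft : (1 / ε) • N⁻¹ * (ε • N) = 1 := by
    rw [smul_mul_smul_comm, one_div_mul_cancel hε.ne', one_smul, nonsing_inv_mul _ hN]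
  have hright : ε • N * ((1 / ε) • N⁻¹) = 1 := by
    rw [smul_mul_smul_comm, mul_one_div_cancel hε.ne', one_smul, mul_nonsing_inv _ hN]
  rw [hcov]
  exact ⟨sandwich_mul_one_add_eq (mul_nonsing_inv _ hM) hεN hleft,
    one_add_mul_sandwich_eq (nonsing_inv_mul _ hM) hεN hright⟩

theorem riccatiCore_mul_eq_one (hε : 0 < ε) {Q : Matrix ι ι ℝ} (hQ : Q.PosDef)
    (B : Matrix ι κ ℝ) (hR : R.PosSemidef) (hS : S.IsHermitian) :
    riccatiCore ε Q B R S * (Q⁻¹ + B * sandwichInv ε R S * Bᵀ) = 1 := by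
  unfold riccatiCore
  exact Matrix.sub_mul_mul_mul_add_mul_mul_eq_one (mul_nonsing_inv _ hQ.det_pos.ne'.isUnit)
    (policyCov_mul_one_add hε hR (posSemidef_transpose_mul_mul hQ.posSemidef B) hS).1

theorem inv_riccatiCore (hε : 0 < ε) {Q : Matrix ι ι ℝ} (hQ : Q.PosDef) (B : Matrix ι κ ℝ)
    (hR : R.PosSemidef) (hS : S.IsHermitian) :
    (riccatiCore ε Q B R S)⁻¹ = Q⁻¹ + B * sandwichInv ε R S * Bᵀ :=
  inv_eq_right_inv (riccatiCore_mul_eq_one hε hQ B hR hS)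

theorem riccatiCore_posDef (hε : 0 < ε) {Q : Matrix ι ι ℝ} (hQ : Q.PosDef) (B : Matrix ι κ ℝ)
    (hR : R.PosSemidef) (hS : S.IsHermitian) : (riccatiCore ε Q B R S).PosDef := by
  have hY : (Q⁻¹ + B * sandwichInv ε R S * Bᵀ).PosDef :=
    hQ.inv.add_posSemidef (posSemidef_mul_mul_transpose (sandwichInv_posSemidef hε hR hS) B)
  rw [← inv_eq_left_inv (riccatiCore_mul_eq_one hε hQ B hR hS)]
  exact hY.inv

theorem schur_policyCov_eq (hε : 0 < ε) (hR : R.PosSemidef) (hW : W.PosSemidef)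
    (hS : S.IsHermitian) :
    let C := (1 / ε) • (R + W)
    ε • C - ε • (C * policyCov ε R W S * C) -
        (1 - C * policyCov ε R W S) * (W + W * sandwichInv ε R S * W) *
          (1 - policyCov ε R W S * C) =
      R - R * sandwichInv ε R S * R := by
  intro C
  obtain ⟨h₁, h₂⟩ := policyCov_mul_one_add hε hR hW hS
  set σ := (1 / ε) • policyCov ε R W S
  have hcov : policyCov ε R W S = ε • σ := by
    rw [smul_smul, mul_one_div_cancel hε.ne', one_smul]
  have hC : ε • C = R + W := by rw [smul_smul, mul_one_div_cancel hε.ne', one_smul]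
  have hCσ : C * (ε • σ) = (R + W) * σ := by rw [Matrix.mul_smul, ← Matrix.smul_mul, hC]
  have hσC : ε • σ * C = σ * (R + W) := by rw [Matrix.smul_mul, ← Matrix.mul_smul, hC]
  rw [← add_sub_schur_eq (r := R) h₁ h₂, hcov, hCσ, hσC, hC, ← Matrix.mul_smul, hC]

theorem sub_mul_sandwichInv_mul_posDef (hε : 0 < ε) (hR : R.PosDef) (hS : S.IsHermitian) :
    (R - R * sandwichInv ε R S * R).PosDef := by
  have hM := (posDef_smul_one_add_mul_mul hε hR.posSemidef hS).det_pos.ne'.isUnit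
  have hRu : IsUnit R.det := hR.det_pos.ne'.isUnit
  have hΛ : sandwichInv ε R S * (ε • 1 + R * (S * S)) = S * S :=
    calc _ = S * ((ε • 1 + S * R * S)⁻¹ * (ε • 1 + S * R * S)) * S := by
          simp only [sandwichInv, Matrix.mul_add, Matrix.add_mul, Matrix.mul_smul,
            Matrix.smul_mul, Matrix.mul_one, Matrix.mul_assoc]
      _ = S * S := by rw [nonsing_inv_mul _ hM, Matrix.mul_one]
  have hK : (R - R * sandwichInv ε R S * R) * (ε • R⁻¹ + S * S) = ε • 1 :=
    calc _ = ε • (R * R⁻¹) + R * (S * S) -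
            R * (sandwichInv ε R S * (ε • (R * R⁻¹) + R * (S * S))) := by
          simp only [Matrix.mul_add, Matrix.sub_mul, Matrix.mul_smul, Matrix.mul_assoc]
          module
      _ = ε • 1 := by rw [mul_nonsing_inv _ hRu, hΛ]; abel
  have hKpd : ((1 / ε) • (ε • R⁻¹ + S * S)).PosDef := by
    have hSS := posSemidef_conjTranspose_mul_self S
    rw [hS.eq] at hSS
    exact ((hR.inv.smul hε).add_posSemidef hSS).smul (by positivity)
  have hinv : (R - R * sandwichInv ε R S * R) * ((1 / ε) • (ε • R⁻¹ + S * S)) = 1 := by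
    rw [Matrix.mul_smul, hK, smul_smul, one_div_mul_cancel hε.ne', one_smul]
  rw [← inv_eq_left_inv hinv]
  exact hKpd.inv

end RiccatiStep

theorem msqrt_isHermitian {d : ℕ} (X : Matrix (Fin d) (Fin d) ℝ) : (msqrt X).IsHermitian := by
  unfold msqrt
  split_ifs
  · exact isHermitian_mul_mul_conjTranspose _ (isHermitian_diagonal _)
  · exact isHermitian_zero

namespace LQData

variable {n m : ℕ} (P : LQData n m) {T : ℕ} {Srho : ℕ → Matrix (Fin m) (Fin m) ℝ}

theorem Ric_of_le {k : ℕ} (hk : T ≤ k) : P.Ric T Srho k = P.F := by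
  rw [Ric, dif_pos hk]

theorem Ric_of_lt {k : ℕ} (hk : k < T) :
    P.Ric T Srho k = (P.A k)ᵀ *
      riccatiCore P.ε (P.Ric T Srho (k + 1)) (P.B k) (P.R k) (msqrt (Srho k)) * P.A k := by
  rw [Ric, dif_neg (not_le.2 hk)]
  simp only [riccatiCore, policyCov, Matrix.mul_sub, Matrix.sub_mul, Matrix.mul_smul,
    Matrix.smul_mul, Matrix.mul_assoc]

theorem Ric_posDef (hε : 0 < P.ε) (hA : ∀ k < T, IsUnit (P.A k))
    (hR : ∀ k < T, (P.R k).PosDef) (hF : P.F.PosDef) (k : ℕ) : (P.Ric T Srho k).PosDef := by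
  by_cases hk : T ≤ k
  · rwa [Ric_of_le P hk]
  · rw [Ric_of_lt P (not_le.1 hk)]
    refine posDef_transpose_mul_mul ?_ (hA k (not_le.1 hk))
    exact riccatiCore_posDef hε (Ric_posDef hε hA hR hF (k + 1)) _
      (hR k (not_le.1 hk)).posSemidef (msqrt_isHermitian _)
termination_by T - k

theorem Theta_eq (hε : 0 < P.ε) (hA : ∀ k < T, IsUnit (P.A k))
    (hR : ∀ k < T, (P.R k).PosDef) (hF : P.F.PosDef) {k : ℕ} (hk : k < T) :
    P.Theta T Srho k =
      P.R k - P.R k * sandwichInv P.ε (P.R k) (msqrt (Srho k)) * P.R k := by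
  have hQ := P.Ric_posDef (Srho := Srho) hε hA hR hF (k + 1)
  set Q := P.Ric T Srho (k + 1)
  set Λ := sandwichInv P.ε (P.R k) (msqrt (Srho k))
  have hcore : P.A k * (P.Ric T Srho k)⁻¹ * (P.A k)ᵀ = Q⁻¹ + P.B k * Λ * (P.B k)ᵀ := by
    rw [Ric_of_lt P hk, mul_inv_transpose_mul_mul_mul_transpose (hA k hk),
      inv_riccatiCore hε hQ _ (hR k hk).posSemidef (msqrt_isHermitian _)]
  have hmiddle : (P.B k)ᵀ * Q * P.A k * (P.Ric T Srho k)⁻¹ * ((P.A k)ᵀ * Q * P.B k) =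
      (P.B k)ᵀ * Q * P.B k + (P.B k)ᵀ * Q * P.B k * Λ * ((P.B k)ᵀ * Q * P.B k) :=
    calc _ = (P.B k)ᵀ * Q * (P.A k * (P.Ric T Srho k)⁻¹ * (P.A k)ᵀ) * Q * P.B k := by
          simp only [Matrix.mul_assoc]
      _ = _ := by
          rw [hcore]
          simp only [Matrix.mul_add, Matrix.add_mul, Matrix.mul_assoc,
            mul_nonsing_inv_cancel_left _ _ hQ.det_pos.ne'.isUnit]
  rw [Theta, hmiddle]
  exact schur_policyCov_eq hε (hR k hk).posSemidef
    (posSemidef_transpose_mul_mul hQ.posSemidef _) (msqrt_isHermitian _)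

theorem Theta_posDef (hε : 0 < P.ε) (hA : ∀ k < T, IsUnit (P.A k))
    (hR : ∀ k < T, (P.R k).PosDef) (hF : P.F.PosDef) {k : ℕ} (hk : k < T) :
    (P.Theta T Srho k).PosDef := by
  rw [P.Theta_eq hε hA hR hF hk]
  exact sub_mul_sandwichInv_mul_posDef hε (hR k hk) (msqrt_isHermitian _)

theorem rvec_zero (k : ℕ) : P.rvec T Srho (fun _ => 0) k = 0 := by
  rw [rvec]
  split_ifs
  · rfl
  · rw [rvec_zero (k + 1), mulVec_zero, mulVec_zero, sub_zero]
termination_by T - k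

theorem Jmean_zero : P.Jmean T Srho (fun _ => 0) = 0 := by
  have hext : extV T (fun _ => (0 : Fin m → ℝ)) = fun _ => 0 := by
    funext k
    simp [extV]
  simp [Jmean, hext, rvec_zero]

theorem Jmean_pos (hε : 0 < P.ε) (hA : ∀ k < T, IsUnit (P.A k))
    (hR : ∀ k < T, (P.R k).PosDef) (hF : P.F.PosDef) {μ : Fin T → Fin m → ℝ} (hμ : μ ≠ 0) :
    0 < P.Jmean T Srho μ := by
  have hr := (P.Ric_posDef (Srho := Srho) hε hA hR hF 0).posSemidef.dotProduct_mulVec_nonneg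
    (P.rvec T Srho (extV T μ) 0)
  obtain ⟨j, hj⟩ := Function.ne_iff.1 hμ
  have hsum : 0 < ∑ k : Fin T, μ k ⬝ᵥ P.Theta T Srho k *ᵥ μ k := by
    refine Finset.sum_pos' (fun k _ => ?_) ⟨j, Finset.mem_univ j, ?_⟩
    · simpa using (P.Theta_posDef hε hA hR hF k.isLt).posSemidef.dotProduct_mulVec_nonneg (μ k)
    · simpa using (P.Theta_posDef hε hA hR hF j.isLt).dotProduct_mulVec_pos hj
  rw [star_trivial] at hr
  unfold Jmean
  positivity

theorem Jmean_nonneg (hε : 0 < P.ε) (hA : ∀ k < T, IsUnit (P.A k))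
    (hR : ∀ k < T, (P.R k).PosDef) (hF : P.F.PosDef) (μ : Fin T → Fin m → ℝ) :
    0 ≤ P.Jmean T Srho μ := by
  rcases eq_or_ne μ 0 with rfl | hμ
  · exact P.Jmean_zero.ge
  · exact (P.Jmean_pos hε hA hR hF hμ).le

end LQData

theorem jmean_min_zero_general {n m : ℕ} (T : ℕ)
    (P : LQData n m) (hε : 0 < P.ε)
    (hA : ∀ k < T, IsUnit (P.A k))
    (hR : ∀ k < T, (P.R k).PosDef)
    (hF : P.F.PosDef)
    (Srho : ℕ → Matrix (Fin m) (Fin m) ℝ) :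
    (∀ μ : Fin T → Fin m → ℝ, P.Jmean T Srho (fun _ => 0) ≤ P.Jmean T Srho μ) ∧
      (∀ μ : Fin T → Fin m → ℝ,
        P.Jmean T Srho μ = P.Jmean T Srho (fun _ => 0) → μ = fun _ => 0) := by
  rw [P.Jmean_zero]
  refine ⟨P.Jmean_nonneg hε hA hR hF, fun μ hμ => ?_⟩
  by_contra hne
  exact (P.Jmean_pos hε hA hR hF hne).ne' hμ

theorem jmean_min_zero {n m : ℕ} (hn : 1 ≤ n) (hm : 1 ≤ m) (T : ℕ) (hT : 1 ≤ T)
    (P : LQData n m) (hε : 0 < P.ε)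
    (hA : ∀ k < T, IsUnit (P.A k))
    (hR : ∀ k < T, (P.R k).PosDef) (hSw : ∀ k < T, (P.Sw k).PosDef)
    (hF : P.F.PosDef) (hSini : P.Sini.PosDef)
    (Srho : ℕ → Matrix (Fin m) (Fin m) ℝ) (hSrho : ∀ k < T, (Srho k).PosSemidef) :
    (∀ μ : Fin T → Fin m → ℝ, P.Jmean T Srho (fun _ => 0) ≤ P.Jmean T Srho μ) ∧
      (∀ μ : Fin T → Fin m → ℝ,
        P.Jmean T Srho μ = P.Jmean T Srho (fun _ => 0) → μ = fun _ => 0) :=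
  jmean_min_zero_general T P hε hA hR hF Srho
end
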